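/- Let A be a commutative K-algebra, f ∈ A invertible, and g = 1 − f⁻¹. In ⟨A,A⟩ = (A⊗A)/S one has ⟨fᵐ, gⁿ⟩ = m·(−1)ᵐ·C(n,m)·⟨f, f⁻¹⟩ for all nonnegative integers m, n, where C(n,m) is the binomial coefficient. -/
import Mathlib


open TensorProduct

noncomputable section

variable (K : Type*) [Field K] (A : Type*) [CommRing A] [Algebra K A]

/-- The subspace `S ⊆ A ⊗ A` spanned by all `a⊗b + b⊗a` and `ab⊗c + bc⊗a + ca⊗b`. -/
def cycRel : Submodule K (A ⊗[K] A) :=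
  Submodule.span K
    ({x | ∃ a b : A, x = a ⊗ₜ b + b ⊗ₜ a} ∪
     {x | ∃ a b c : A, x = (a*b) ⊗ₜ c + (b*c) ⊗ₜ a + (c*a) ⊗ₜ b})

/-- `⟨A,A⟩ = (A ⊗ A)/S`. -/
abbrev CycPair := (A ⊗[K] A) ⧸ cycRel K A

/-- `⟨a,b⟩`, the class of `a ⊗ b` in `⟨A,A⟩`. -/
def cycPair (a b : A) : CycPair K A := Submodule.Quotient.mk (a ⊗ₜ b)

/-- The pairing as a bilinear map. -/
def cycPairLin : A →ₗ[K] A →ₗ[K] CycPair K A :=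
  (TensorProduct.mk K A A).compr₂ (cycRel K A).mkQ

lemma cycPair_eq_lin (a b : A) : cycPair K A a b = cycPairLin K A a b := rfl

lemma cycPair_zsmul_right (a : A) (z : ℤ) (b : A) :
    cycPair K A a (z • b) = z • cycPair K A a b := by
  simp only [cycPair_eq_lin]
  exact map_zsmul (cycPairLin K A a) z b

lemma cycPair_sum_right {ι : Type*} (a : A) (s : Finset ι) (b : ι → A) :
    cycPair K A a (∑ i ∈ s, b i) = ∑ i ∈ s, cycPair K A a (b i) := by
  simp only [cycPair_eq_lin]
  exact map_sum (cycPairLin K A a) b s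

lemma cycPair_swap (a b : A) : cycPair K A a b + cycPair K A b a = 0 := by
  have h : (a ⊗ₜ[K] b + b ⊗ₜ[K] a) ∈ cycRel K A :=
    Submodule.subset_span (Or.inl ⟨a, b, rfl⟩)
  have h2 : Submodule.Quotient.mk (p := cycRel K A) (a ⊗ₜ[K] b + b ⊗ₜ[K] a) = 0 :=
    (Submodule.Quotient.mk_eq_zero _).2 h
  rw [Submodule.Quotient.mk_add] at h2
  exact h2

lemma cycPair_cyc (a b c : A) :
    cycPair K A (a*b) c + cycPair K A (b*c) a + cycPair K A (c*a) b = 0 := by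
  have h : ((a*b) ⊗ₜ[K] c + (b*c) ⊗ₜ[K] a + (c*a) ⊗ₜ[K] b) ∈ cycRel K A :=
    Submodule.subset_span (Or.inr ⟨a, b, c, rfl⟩)
  have h2 : Submodule.Quotient.mk (p := cycRel K A)
      ((a*b) ⊗ₜ[K] c + (b*c) ⊗ₜ[K] a + (c*a) ⊗ₜ[K] b) = 0 :=
    (Submodule.Quotient.mk_eq_zero _).2 h
  rw [Submodule.Quotient.mk_add, Submodule.Quotient.mk_add] at h2
  exact h2

lemma cycPair_one_right (a : A) : cycPair K A a 1 = 0 := by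
  have h1 := cycPair_cyc K A 1 1 a
  have h2 := cycPair_swap K A 1 a
  simp only [one_mul, mul_one] at h1
  -- h1 : cycPair 1 a + cycPair a 1 + cycPair a 1 = 0
  -- h2 : cycPair 1 a + cycPair a 1 = 0
  have : cycPair K A a 1 + (cycPair K A 1 a + cycPair K A a 1) = 0 := by
    rw [← add_assoc, add_comm (cycPair K A a 1)]; exact h1
  rw [h2, add_zero] at this
  exact this

lemma cycPair_one_left (a : A) : cycPair K A 1 a = 0 := by
  have h2 := cycPair_swap K A 1 a
  rw [cycPair_one_right, add_zero] at h2
  exact h2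

lemma cycPair_neg_swap (a b : A) : cycPair K A a b = - cycPair K A b a :=
  eq_neg_of_add_eq_zero_left (cycPair_swap K A a b)

lemma cycPair_leibniz (a b c : A) :
    cycPair K A (a*b) c = cycPair K A a (b*c) + cycPair K A b (a*c) := by
  have h1 := cycPair_cyc K A a b c
  have e1 : cycPair K A (b*c) a = - cycPair K A a (b*c) :=
    eq_neg_of_add_eq_zero_left (cycPair_swap K A (b*c) a)
  have e2 : cycPair K A (c*a) b = - cycPair K A b (a*c) := by
    rw [mul_comm c a]
    exact eq_neg_of_add_eq_zero_left (cycPair_swap K A (a*c) b)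
  rw [e1, e2] at h1
  have h' : cycPair K A (a*b) c - (cycPair K A a (b*c) + cycPair K A b (a*c)) = 0 := by
    rw [← h1]; abel
  exact sub_eq_zero.1 h'

lemma cycPair_pow_aux (a : A) (m k : ℕ) :
    cycPair K A (a^(m+1)) (a^(k+1)) = (m+1 : ℕ) • cycPair K A a (a^(m+k+1)) := by
  induction m generalizing k with
  | zero => simp
  | succ m ih =>
      have h : a^(m+1+1) = a * a^(m+1) := pow_succ' a (m+1)
      rw [h, cycPair_leibniz]
      have h1 : a^(m+1) * a^(k+1) = a^(m+1+k+1) := by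
        rw [← pow_add, show m+1+(k+1) = m+1+k+1 from by omega]
      have h2 : a * a^(k+1) = a^(k+1+1) := (pow_succ' a (k+1)).symm
      rw [h1, h2, ih (k+1)]
      rw [show m + (k+1) + 1 = m+1+k+1 from by omega]
      conv_rhs => rw [succ_nsmul]
      exact add_comm _ _

lemma cycPair_self_pow [CharZero K] (a : A) (s : ℕ) : cycPair K A a (a^s) = 0 := by
  cases s with
  | zero => simpa using cycPair_one_right K A a
  | succ s =>
      have h := cycPair_pow_aux K A a s 0
      simp only [Nat.add_zero, zero_add, pow_one] at h
      have hsw := cycPair_swap K A (a^(s+1)) a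
      rw [h] at hsw
      have hz : ((s+1)+1 : ℕ) • cycPair K A a (a^(s+1)) = 0 := by
        rw [succ_nsmul]; exact hsw
      have h4 : (((s+1)+1 : ℕ) : K) • cycPair K A a (a^(s+1)) = 0 := by
        rw [Nat.cast_smul_eq_nsmul]; exact hz
      have h5 : (((s+1)+1 : ℕ) : K) ≠ 0 := Nat.cast_ne_zero.2 (by omega)
      exact (smul_eq_zero.1 h4).resolve_left h5

lemma cycPair_pow_pow [CharZero K] (a : A) (m k : ℕ) : cycPair K A (a^m) (a^k) = 0 := by
  cases m with
  | zero => simpa using cycPair_one_left K A (a^k)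
  | succ m =>
      cases k with
      | zero => simpa using cycPair_one_right K A (a^(m+1))
      | succ k =>
          rw [cycPair_pow_aux K A a m k, cycPair_self_pow K A, smul_zero]

section Unit

variable (f : A) (hf : IsUnit f)

lemma cycPair_f_vpow_ge2 [CharZero K] (j : ℕ) :
    cycPair K A f (((hf.unit⁻¹ : Aˣ) : A)^(j+2)) = 0 := by
  set v : A := ((hf.unit⁻¹ : Aˣ) : A) with hv
  have hfv : f * v = 1 := IsUnit.mul_val_inv hf
  have hsw := cycPair_swap K A (v^(j+2)) f
  have h : v^(j+2) = v * v^(j+1) := by ring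
  rw [h, cycPair_leibniz] at hsw
  have h1 : v^(j+1) * f = v^j := by
    have : v^(j+1) * f = v^j * (v * f) := by ring
    rw [this, mul_comm v f, hfv, mul_one]
  have h2 : v * f = 1 := by rw [mul_comm]; exact hfv
  rw [h1, h2, cycPair_one_right, cycPair_self_pow K A v j, add_zero, zero_add] at hsw
  rw [h]
  exact hsw

lemma cycPair_f_vpow [CharZero K] (j : ℕ) :
    cycPair K A f (((hf.unit⁻¹ : Aˣ) : A)^j) =
      (if j = 1 then (1:ℤ) else 0) • cycPair K A f ((hf.unit⁻¹ : Aˣ) : A) := by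
  match j with
  | 0 => simpa using cycPair_one_right K A f
  | 1 => simp
  | (j+2) => rw [cycPair_f_vpow_ge2 K A f hf j]; simp

lemma cycPair_fpow_vpow [CharZero K] (m j : ℕ) :
    cycPair K A (f^m) (((hf.unit⁻¹ : Aˣ) : A)^j) =
      (if m = j then (m:ℤ) else 0) • cycPair K A f ((hf.unit⁻¹ : Aˣ) : A) := by
  set v : A := ((hf.unit⁻¹ : Aˣ) : A) with hv
  have hfv : f * v = 1 := IsUnit.mul_val_inv hf
  have hcancel : ∀ s t : ℕ, f^s * v^(s+t) = v^t := by
    intro s t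
    have : f^s * v^(s+t) = (f*v)^s * v^t := by rw [pow_add]; ring
    rw [this, hfv, one_pow, one_mul]
  have hcancel' : ∀ s t : ℕ, f^(s+t) * v^s = f^t := by
    intro s t
    have : f^(s+t) * v^s = (f*v)^s * f^t := by rw [pow_add]; ring
    rw [this, hfv, one_pow, one_mul]
  induction m generalizing j with
  | zero =>
      cases j with
      | zero => simp [cycPair_one_left K A]
      | succ j => simp [cycPair_one_left K A, Nat.succ_ne_zero]
  | succ m ih =>
      cases j with
      | zero =>
          simp only [pow_zero]
          rw [cycPair_one_right K A]
          simp
      | succ j =>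
          have hsplit : f^(m+1) = f * f^m := by ring
          rw [hsplit, cycPair_leibniz]
          have h2 : f * v^(j+1) = v^j := by
            have : f * v^(j+1) = (f*v) * v^j := by ring
            rw [this, hfv, one_mul]
          rw [h2, ih j]
          have hmid : cycPair K A f (f^m * v^(j+1)) =
              (if m = j then (1:ℤ) else 0) • cycPair K A f v := by
            rcases le_or_gt m j with hle | hlt
            · obtain ⟨t, ht⟩ : ∃ t, j + 1 = m + t := ⟨j + 1 - m, by omega⟩
              rw [ht, hcancel m t, hv, cycPair_f_vpow K A f hf t, ← hv]
              by_cases hmj : m = j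
              · rw [if_pos (by omega : t = 1), if_pos hmj]
              · rw [if_neg (by omega : ¬ t = 1), if_neg hmj]
            · obtain ⟨t, ht⟩ : ∃ t, m = (j+1) + t := ⟨m - (j+1), by omega⟩
              rw [ht, hcancel' (j+1) t, cycPair_self_pow K A f t]
              have hne : ¬ ((j+1) + t = j) := by omega
              rw [if_neg hne, zero_smul]
          rw [hmid]
          by_cases hmj : m = j
          · subst hmj
            rw [if_pos rfl, if_pos rfl, if_pos rfl, ← add_smul]
            congr 1
            push_cast
            ring
          · rw [if_neg hmj, if_neg hmj, if_neg (by omega : ¬ m + 1 = j + 1)]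
            simp

end Unit

/-- For `f` invertible in a commutative `K`-algebra `A` and `g = 1 - f⁻¹`, one has
`⟨fᵐ, gⁿ⟩ = m·(-1)ᵐ·C(n,m)·⟨f, f⁻¹⟩` in `⟨A,A⟩` for all nonnegative integers `m, n`. -/
theorem cycPair_pow_mixed (K : Type*) [Field K] [CharZero K]
    (A : Type*) [CommRing A] [Algebra K A] (f : A) (hf : IsUnit f) (m n : ℕ) :
    cycPair K A (f ^ m) ((1 - ((hf.unit⁻¹ : Aˣ) : A)) ^ n) =
      ((m : ℤ) * (-1) ^ m * (n.choose m : ℤ)) •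
        cycPair K A f (((hf.unit⁻¹ : Aˣ) : A)) := by
  set v : A := ((hf.unit⁻¹ : Aˣ) : A) with hv
  have hexp : (1 - v) ^ n =
      ∑ k ∈ Finset.range (n+1), (((-1)^k * (n.choose k : ℤ)) : ℤ) • v^k := by
    have h1 : (1 - v) = (-v) + 1 := by ring
    rw [h1, add_pow]
    apply Finset.sum_congr rfl
    intro k _
    rw [zsmul_eq_mul]
    push_cast
    ring
  rw [hexp, cycPair_sum_right]
  have hterm : ∀ k ∈ Finset.range (n+1),
      cycPair K A (f^m) ((((-1)^k * (n.choose k : ℤ)) : ℤ) • v^k) =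
        (if m = k then ((m:ℤ) * (-1)^m * (n.choose m : ℤ)) else 0) •
          cycPair K A f v := by
    intro k _
    rw [cycPair_zsmul_right, hv, cycPair_fpow_vpow K A f hf m k]
    by_cases hmk : m = k
    · subst hmk
      rw [if_pos rfl, if_pos rfl, smul_smul]
      ring_nf
    · rw [if_neg hmk, if_neg hmk]
      simp
  rw [Finset.sum_congr rfl hterm, ← Finset.sum_smul, Finset.sum_ite_eq]
  by_cases hm : m ∈ Finset.range (n+1)
  · rw [if_pos hm]
  · rw [if_neg hm]
    have : n.choose m = 0 := Nat.choose_eq_zero_of_lt (by simpa using hm)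
    rw [this]
    push_cast
    simp
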